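/- Let φ(z) = e^{−z²/2}/√(2π) be the standard normal density, Φ its CDF, and Q(z) = 1 − Φ(z). For all real λ, μ with 0 < λ < μ ≤ 1, the integral C₁ = ∫_{−∞}^{∞} z · φ(z) · (2μ − 2μλQ(z) + λ²Q(z)²) / (2(μ − λQ(z))²) dz is finite and strictly negative. -/
import Mathlib

open MeasureTheory Set

/-- The standard normal density. -/
noncomputable def φ (z : ℝ) : ℝ := Real.exp (-z ^ 2 / 2) / Real.sqrt (2 * Real.pi)

/-- The standard normal tail function `Q(z) = 1 - Φ(z)`. -/
noncomputable def Q (z : ℝ) : ℝ := ∫ u in Set.Ioi z, φ u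

lemma sqrt2pi_pos : 0 < Real.sqrt (2 * Real.pi) :=
  Real.sqrt_pos.mpr (by positivity)

lemma φ_pos (z : ℝ) : 0 < φ z := div_pos (Real.exp_pos _) sqrt2pi_pos

lemma φ_eq : φ = fun z => Real.exp (-(1/2 : ℝ) * z ^ 2) / Real.sqrt (2 * Real.pi) := by
  funext z; unfold φ; ring_nf

lemma φ_even (z : ℝ) : φ (-z) = φ z := by unfold φ; rw [neg_pow]; ring_nf

lemma integrable_φ : Integrable φ := by
  rw [φ_eq]
  exact (integrable_exp_neg_mul_sq (by norm_num : (0:ℝ) < 1/2)).div_const _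

lemma integral_φ : ∫ z, φ z = 1 := by
  rw [φ_eq]
  rw [integral_div, integral_gaussian]
  rw [div_eq_one_iff_eq (ne_of_gt sqrt2pi_pos)]
  rw [show Real.pi / (1/2 : ℝ) = 2 * Real.pi by ring]

lemma Q_antitone : Antitone Q := by
  intro a b hab
  exact setIntegral_mono_set integrable_φ.integrableOn
    (Filter.Eventually.of_forall fun z => (φ_pos z).le)
    (HasSubset.Subset.eventuallyLE (Ioi_subset_Ioi hab))

lemma Q_meas : Measurable Q := Q_antitone.measurable

lemma Q_nonneg (z : ℝ) : 0 ≤ Q z :=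
  setIntegral_nonneg measurableSet_Ioi fun x _ => (φ_pos x).le

lemma Q_le_one (z : ℝ) : Q z ≤ 1 := by
  rw [← integral_φ]
  exact setIntegral_le_integral integrable_φ
    (Filter.Eventually.of_forall fun x => (φ_pos x).le)

lemma Q_neg (z : ℝ) : Q (-z) = 1 - Q z := by
  have h1 : (∫ x in Iic z, φ (-x)) = ∫ x in Ioi (-z), φ x := integral_comp_neg_Iic z φ
  simp only [φ_even] at h1
  have h2 : (∫ x in Iic z, φ x) + ∫ x in Ioi z, φ x = 1 := by
    rw [← integral_φ, ← integral_add_compl measurableSet_Iic integrable_φ, compl_Iic]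
  unfold Q
  rw [← h1]
  linarith

lemma Q_pos_gap {z : ℝ} (hz : 0 < z) : Q z < Q (-z) := by
  have hsub : (∫ x in Ioc (-z) z, φ x) + ∫ x in Ioi z, φ x = ∫ x in Ioi (-z), φ x := by
    rw [← setIntegral_union (Ioc_disjoint_Ioi le_rfl) measurableSet_Ioi
      integrable_φ.integrableOn integrable_φ.integrableOn,
      Ioc_union_Ioi_eq_Ioi (by linarith)]
  have hpos : 0 < ∫ x in Ioc (-z) z, φ x := by
    rw [setIntegral_pos_iff_support_of_nonneg_ae
      (Filter.Eventually.of_forall fun x => (φ_pos x).le) integrable_φ.integrableOn]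
    have : Function.support φ = univ := by
      ext x; simp [Function.mem_support, (φ_pos x).ne']
    rw [this, univ_inter, Real.volume_Ioc]
    simp only [ENNReal.ofReal_pos]
    linarith
  unfold Q
  linarith

lemma key_ineq (lam μ q1 q2 : ℝ) (h1 : 0 < lam) (h2 : lam < μ) (h3 : μ ≤ 1)
    (hq1 : 0 ≤ q1) (hq2 : q2 ≤ 1) (hlt : q1 < q2) :
    (2 * μ - 2 * μ * lam * q1 + lam ^ 2 * q1 ^ 2) / (2 * (μ - lam * q1) ^ 2) <
    (2 * μ - 2 * μ * lam * q2 + lam ^ 2 * q2 ^ 2) / (2 * (μ - lam * q2) ^ 2) := by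
  have ha1 : 0 < μ - lam * q1 := by nlinarith
  have ha2 : 0 < μ - lam * q2 := by nlinarith
  rw [div_lt_div_iff₀ (by positivity) (by positivity)]
  nlinarith [mul_pos (mul_pos (mul_pos (by nlinarith : (0:ℝ) < μ * (2 - μ))
    (by linarith : 0 < (μ - lam * q2) + (μ - lam * q1)))
    (by nlinarith : (0:ℝ) < (μ - lam * q1) - (μ - lam * q2))) (by norm_num : (0:ℝ) < 2)]

/-- The cost `C₁` of a perfectly aligned agent is finite and strictly negative. -/
theorem stmt9 (lam μ : ℝ) (h1 : 0 < lam) (h2 : lam < μ) (h3 : μ ≤ 1) :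
    Integrable (fun z => z * φ z * (2 * μ - 2 * μ * lam * Q z + lam ^ 2 * Q z ^ 2) /
      (2 * (μ - lam * Q z) ^ 2)) ∧
    (∫ z, z * φ z * (2 * μ - 2 * μ * lam * Q z + lam ^ 2 * Q z ^ 2) /
      (2 * (μ - lam * Q z) ^ 2)) < 0 := by
  set F := fun z => z * φ z * (2 * μ - 2 * μ * lam * Q z + lam ^ 2 * Q z ^ 2) /
      (2 * (μ - lam * Q z) ^ 2) with hF
  have hden : ∀ z, 0 < μ - lam * Q z := by
    intro z
    nlinarith [Q_nonneg z, Q_le_one z]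
  -- integrability
  have φ_meas : Measurable φ := by unfold φ; fun_prop
  have hmeas : AEStronglyMeasurable F volume := by
    apply Measurable.aestronglyMeasurable
    exact ((measurable_id.mul φ_meas).mul
      ((measurable_const.sub (Q_meas.const_mul (2 * μ * lam))).add
        ((Q_meas.pow_const 2).const_mul (lam ^ 2)))).div
      (((measurable_const.sub (Q_meas.const_mul lam)).pow_const 2).const_mul 2)
  have hC : (0:ℝ) < 2 * (μ - lam)^2 := mul_pos two_pos (pow_pos (sub_pos.mpr h2) 2)
  set C := (2 * μ + 2 * μ * lam + lam ^ 2) / (2 * (μ - lam) ^ 2) with hCdef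
  have hIg : Integrable (fun z => C * (|z| * φ z)) := by
    have : Integrable (fun z : ℝ => |z * Real.exp (-(1/2 : ℝ) * z ^ 2)|) :=
      (integrable_mul_exp_neg_mul_sq (by norm_num : (0:ℝ) < 1/2)).abs
    have h2' := (this.div_const (Real.sqrt (2 * Real.pi))).const_mul C
    refine h2'.congr (Filter.Eventually.of_forall fun z => ?_)
    simp only [φ_eq]
    rw [abs_mul, abs_of_nonneg (Real.exp_pos _).le]
    ring
  have hbound : ∀ z, ‖F z‖ ≤ C * (|z| * φ z) := by
    intro z
    have hq0 := Q_nonneg z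
    have hq1 := Q_le_one z
    have hdz := hden z
    have hφ := φ_pos z
    have hD : (0:ℝ) < 2 * (μ - lam * Q z) ^ 2 := by positivity
    rw [hF, Real.norm_eq_abs, abs_div, abs_of_pos hD, abs_mul, abs_mul, abs_of_pos hφ]
    have hμ : (0:ℝ) < μ := h1.trans h2
    have e1 : (0:ℝ) ≤ 2 * μ * lam * Q z := mul_nonneg (by positivity) hq0
    have e2 : 2 * μ * lam * Q z ≤ 2 * μ * lam :=
      mul_le_of_le_one_right (by positivity) hq1
    have e3 : lam ^ 2 * Q z ^ 2 ≤ lam ^ 2 :=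
      mul_le_of_le_one_right (sq_nonneg lam) (pow_le_one₀ hq0 hq1)
    have e4 : (0:ℝ) ≤ lam ^ 2 * Q z ^ 2 := by positivity
    have hnum : |2 * μ - 2 * μ * lam * Q z + lam ^ 2 * Q z ^ 2| ≤ 2 * μ + 2 * μ * lam + lam ^ 2 := by
      rw [abs_le]
      constructor <;> nlinarith
    have hDge : 2 * (μ - lam) ^ 2 ≤ 2 * (μ - lam * Q z) ^ 2 := by nlinarith
    calc |z| * φ z * |2 * μ - 2 * μ * lam * Q z + lam ^ 2 * Q z ^ 2| / (2 * (μ - lam * Q z) ^ 2)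
        ≤ |z| * φ z * (2 * μ + 2 * μ * lam + lam ^ 2) / (2 * (μ - lam) ^ 2) := by
          apply div_le_div₀ (mul_nonneg (mul_nonneg (abs_nonneg z) hφ.le)
            (by positivity)) _ hC hDge
          exact mul_le_mul_of_nonneg_left hnum (mul_nonneg (abs_nonneg z) hφ.le)
      _ = C * (|z| * φ z) := by rw [hCdef]; ring
  have hInt : Integrable F := Integrable.mono' hIg hmeas (Filter.Eventually.of_forall hbound)
  refine ⟨hInt, ?_⟩
  -- negativity
  have hIntNeg : Integrable (fun z => F (-z)) := hInt.comp_neg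
  have hsplit : (∫ z, F z) = ∫ z in Ioi (0:ℝ), (F z + F (-z)) := by
    calc (∫ z, F z) = (∫ z in Ioi (0:ℝ), F z) + ∫ z in Iic (0:ℝ), F z := by
          rw [← integral_add_compl measurableSet_Ioi hInt, compl_Ioi]
      _ = (∫ z in Ioi (0:ℝ), F z) + ∫ z in Ioi (0:ℝ), F (-z) := by
          rw [integral_comp_neg_Ioi]; norm_num
      _ = ∫ z in Ioi (0:ℝ), (F z + F (-z)) :=
          (integral_add hInt.integrableOn hIntNeg.integrableOn).symm
  rw [hsplit]
  have hHneg : ∀ z ∈ Ioi (0:ℝ), F z + F (-z) < 0 := by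
    intro z hz
    rw [mem_Ioi] at hz
    have hq := Q_pos_gap hz
    have hkey := key_ineq lam μ (Q z) (Q (-z)) h1 h2 h3 (Q_nonneg z) (Q_le_one (-z)) hq
    have hzφ : 0 < z * φ z := mul_pos hz (φ_pos z)
    have : F z + F (-z) = (z * φ z) *
        ((2 * μ - 2 * μ * lam * Q z + lam ^ 2 * Q z ^ 2) / (2 * (μ - lam * Q z) ^ 2)
        - (2 * μ - 2 * μ * lam * Q (-z) + lam ^ 2 * Q (-z) ^ 2) / (2 * (μ - lam * Q (-z)) ^ 2)) := by
      rw [hF]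
      simp only [φ_even]
      ring
    rw [this]
    exact mul_neg_of_pos_of_neg hzφ (by linarith)
  have hIntH : IntegrableOn (fun z => F z + F (-z)) (Ioi 0) :=
    hInt.integrableOn.add hIntNeg.integrableOn
  have : 0 < ∫ z in Ioi (0:ℝ), -(F z + F (-z)) := by
    rw [setIntegral_pos_iff_support_of_nonneg_ae]
    · have hsub : Ioi (0:ℝ) ⊆ Function.support (fun z => -(F z + F (-z))) := by
        intro z hz
        simp only [Function.mem_support, neg_ne_zero]
        exact (hHneg z hz).ne
      calc (0:ENNReal) < volume (Ioi (0:ℝ)) := by rw [Real.volume_Ioi]; exact ENNReal.zero_lt_top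
        _ = volume (Function.support (fun z => -(F z + F (-z))) ∩ Ioi 0) := by
            rw [inter_eq_right.mpr hsub]
    · exact (ae_restrict_iff' measurableSet_Ioi).mpr
        (Filter.Eventually.of_forall fun z hz => by simp only [Pi.zero_apply]; linarith [hHneg z hz])
    · exact hIntH.neg
  rw [integral_neg] at this
  linarith
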